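/- Let N ≥ 1 be an integer, let p > 2 and q ∈ (1,2), and set q* := p/(p−q). Let f : ℝ^N → ℝ be a bounded measurable function with ∫_{ℝ^N} |f|^{q*} dx < ∞. Let (u_n) be a sequence of measurable functions and u a measurable function on ℝ^N such that sup_n ‖u_n‖_{L^p(ℝ^N)} < ∞, ‖u‖_{L^p(ℝ^N)} < ∞, and for every R > 0, ∫_{B_R(0)} |u_n − u|² dx → 0 as n → ∞. Then ∫_{ℝ^N} f |u_n|^q dx → ∫_{ℝ^N} f |u|^q dx as n → ∞. -/

import Mathlib

open MeasureTheory Set Filter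
open scoped ENNReal NNReal Topology

/-!
Split the space into a large ball `B` and its complement. Off `B`, Hölder's inequality with
exponents `q* = p / (p - q)` and `p / q` bounds `∫ |f| (|uₙ|^q + |u|^q)` by
`‖f‖_{L^{q*}(Bᶜ)}` times a constant depending only on the `L^p` bounds, and this is small once `B`
is large. On `B`, convexity of `t ↦ t^q` gives
`||a|^q - |b|^q| ≤ q (|a|^{q-1} + |b|^{q-1}) |a - b|`; with `|f| ≤ M` and Cauchy–Schwarz this
bounds the integral by a multiple of `‖uₙ - u‖_{L²(B)}`. The multiple is uniform in `n` because
`2 (q - 1) ≤ p`, so `|uₙ|^{q-1}` is bounded in `L²(B)`.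
-/

theorem rpow_sub_rpow_le_mul_rpow_sub_one {q x y : ℝ} (hq : 1 ≤ q) (hy : 0 ≤ y) (hyx : y ≤ x) :
    x ^ q - y ^ q ≤ q * x ^ (q - 1) * (x - y) := by
  rcases hyx.eq_or_lt with rfl | hyx
  · simp
  have hslope := (convexOn_rpow hq).slope_le_of_hasDerivAt hy (hy.trans hyx.le) hyx
    (Real.hasDerivAt_rpow_const (Or.inr hq))
  rwa [slope_def_field, div_le_iff₀ (sub_pos.2 hyx)] at hslope

theorem abs_abs_rpow_sub_abs_rpow_le {q : ℝ} (hq : 1 ≤ q) (a b : ℝ) :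
    |(|a| ^ q - |b| ^ q)| ≤ q * (|a| ^ (q - 1) + |b| ^ (q - 1)) * |a - b| := by
  wlog hba : |b| ≤ |a| generalizing a b
  · rw [abs_sub_comm, add_comm, abs_sub_comm a]
    exact this b a (le_of_not_ge hba)
  have hq0 : 0 ≤ q := zero_le_one.trans hq
  rw [abs_of_nonneg (sub_nonneg.2 (Real.rpow_le_rpow (abs_nonneg b) hba hq0))]
  calc |a| ^ q - |b| ^ q ≤ q * |a| ^ (q - 1) * (|a| - |b|) :=
        rpow_sub_rpow_le_mul_rpow_sub_one hq (abs_nonneg b) hba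
    _ ≤ q * (|a| ^ (q - 1) + |b| ^ (q - 1)) * |a - b| := by
        gcongr
        · exact le_add_of_nonneg_right (by positivity)
        · exact abs_sub_abs_le_abs_sub a b

theorem enorm_abs_rpow {q : ℝ} (hq : 0 ≤ q) (a : ℝ) : ‖|a| ^ q‖ₑ = ‖a‖ₑ ^ q := by
  rw [Real.enorm_of_nonneg (by positivity), Real.enorm_eq_ofReal_abs,
    ENNReal.ofReal_rpow_of_nonneg (abs_nonneg a) hq]

theorem enorm_abs_rpow_sub_abs_rpow_le_add {q : ℝ} (hq : 0 ≤ q) (a b : ℝ) :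
    ‖|a| ^ q - |b| ^ q‖ₑ ≤ ‖a‖ₑ ^ q + ‖b‖ₑ ^ q := by
  simpa only [enorm_abs_rpow hq] using enorm_sub_le (a := |a| ^ q) (b := |b| ^ q)

theorem enorm_abs_rpow_sub_abs_rpow_le {q : ℝ} (hq : 1 ≤ q) (a b : ℝ) :
    ‖|a| ^ q - |b| ^ q‖ₑ ≤ ENNReal.ofReal q * (‖a‖ₑ ^ (q - 1) + ‖b‖ₑ ^ (q - 1)) * ‖a - b‖ₑ := by
  have hq1 : 0 ≤ q - 1 := sub_nonneg.2 hq
  calc ‖|a| ^ q - |b| ^ q‖ₑ = ENNReal.ofReal |(|a| ^ q - |b| ^ q)| := Real.enorm_eq_ofReal_abs _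
    _ ≤ ENNReal.ofReal (q * (|a| ^ (q - 1) + |b| ^ (q - 1)) * |a - b|) :=
        ENNReal.ofReal_le_ofReal (abs_abs_rpow_sub_abs_rpow_le hq a b)
    _ = _ := by
        rw [ENNReal.ofReal_mul (by positivity), ENNReal.ofReal_mul (by positivity),
          ENNReal.ofReal_add (by positivity) (by positivity),
          ← ENNReal.ofReal_rpow_of_nonneg (abs_nonneg a) hq1,
          ← ENNReal.ofReal_rpow_of_nonneg (abs_nonneg b) hq1]
        simp only [Real.enorm_eq_ofReal_abs]

variable {α E : Type*} [MeasurableSpace α] {μ : Measure α} [NormedAddCommGroup E]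

theorem eLpNorm_ofReal_eq_eLpNorm' {p : ℝ} (hp : 0 < p) (f : α → E) :
    eLpNorm f (ENNReal.ofReal p) μ = eLpNorm' f p μ := by
  rw [eLpNorm_eq_eLpNorm' (by simpa using hp) ENNReal.ofReal_ne_top, ENNReal.toReal_ofReal hp.le]

theorem eLpNorm'_eq_lintegral_ofReal_abs_rpow {r : ℝ} (hr : 0 ≤ r) (f : α → ℝ) :
    eLpNorm' f r μ = (∫⁻ x, ENNReal.ofReal (|f x| ^ r) ∂μ) ^ (1 / r) := by
  simp only [eLpNorm', Real.enorm_eq_ofReal_abs, ENNReal.ofReal_rpow_of_nonneg (abs_nonneg _) hr]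

theorem tendsto_eLpNorm'_two_of_tendsto_lintegral_sq {ι : Type*} {l : Filter ι}
    {g : ι → α → ℝ} (h : Tendsto (fun i => ∫⁻ x, ENNReal.ofReal (g i x ^ 2) ∂μ) l (𝓝 0)) :
    Tendsto (fun i => eLpNorm' (g i) 2 μ) l (𝓝 0) := by
  simp only [eLpNorm'_eq_lintegral_ofReal_abs_rpow zero_le_two, Real.rpow_two, sq_abs]
  exact ((ENNReal.continuous_rpow_const (y := 1 / 2)).tendsto' 0 0
    (ENNReal.zero_rpow_of_pos (by positivity))).comp h

theorem tendsto_lintegral_nhds_zero_of_forall_compl_le {ι : Type*} {l : Filter ι}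
    {g : ι → α → ℝ≥0∞}
    (h : ∀ ε > 0, ∃ s, MeasurableSet s ∧ (∀ i, ∫⁻ x in sᶜ, g i x ∂μ ≤ ε) ∧
      Tendsto (fun i => ∫⁻ x in s, g i x ∂μ) l (𝓝 0)) :
    Tendsto (fun i => ∫⁻ x, g i x ∂μ) l (𝓝 0) := by
  refine ENNReal.tendsto_nhds_zero.2 fun ε hε => ?_
  obtain ⟨s, hs, htail, hlocal⟩ := h (ε / 2) (ENNReal.half_pos hε.ne')
  filter_upwards [ENNReal.tendsto_nhds_zero.1 hlocal (ε / 2) (ENNReal.half_pos hε.ne')] with i hi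
  calc ∫⁻ x, g i x ∂μ = ∫⁻ x in s, g i x ∂μ + ∫⁻ x in sᶜ, g i x ∂μ :=
        (lintegral_add_compl _ hs).symm
    _ ≤ ε / 2 + ε / 2 := add_le_add hi (htail i)
    _ = ε := ENNReal.add_halves ε

theorem tendsto_setLIntegral_compl_ball [PseudoMetricSpace α] [OpensMeasurableSpace α]
    {g : α → ℝ≥0∞} (hg : ∫⁻ x, g x ∂μ ≠ ∞) (x₀ : α) :
    Tendsto (fun R : ℝ => ∫⁻ x in (Metric.ball x₀ R)ᶜ, g x ∂μ) atTop (𝓝 0) := by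
  have hempty : ⋂ R : ℝ, (Metric.ball x₀ R)ᶜ = ∅ := by
    rw [← compl_iUnion, compl_empty_iff]
    exact eq_univ_of_forall fun x => mem_iUnion.2 ⟨dist x x₀ + 1, Metric.mem_ball.2 (lt_add_one _)⟩
  have h := tendsto_measure_iInter_atTop (μ := μ.withDensity g)
    (s := fun R : ℝ => (Metric.ball x₀ R)ᶜ)
    (fun R => measurableSet_ball.compl.nullMeasurableSet)
    (fun R R' hRR' => compl_subset_compl.2 (Metric.ball_subset_ball hRR'))
    ⟨0, by
      rw [withDensity_apply _ measurableSet_ball.compl]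
      exact ne_top_of_le_ne_top hg (setLIntegral_le_lintegral _ _)⟩
  rw [hempty, measure_empty] at h
  exact h.congr fun R => withDensity_apply _ measurableSet_ball.compl

theorem tendsto_eLpNorm'_restrict_compl_ball [PseudoMetricSpace α] [OpensMeasurableSpace α]
    {r : ℝ} (hr : 0 < r) {f : α → E} (hf : eLpNorm' f r μ ≠ ∞) (x₀ : α) :
    Tendsto (fun R : ℝ => eLpNorm' f r (μ.restrict (Metric.ball x₀ R)ᶜ)) atTop (𝓝 0) := by
  have hint : ∫⁻ x, ‖f x‖ₑ ^ r ∂μ ≠ ∞ := by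
    rw [lintegral_rpow_enorm_eq_rpow_eLpNorm' hr]
    exact ENNReal.rpow_ne_top_of_nonneg hr.le hf
  exact ((ENNReal.continuous_rpow_const (y := 1 / r)).tendsto' 0 0
    (ENNReal.zero_rpow_of_pos (by positivity))).comp (tendsto_setLIntegral_compl_ball hint x₀)

theorem lintegral_enorm_mul_enorm_rpow_le {F : Type*} [NormedAddCommGroup F] {p q : ℝ}
    (hq : 0 < q) (hqp : q < p) {f : α → E} {g : α → F} (hf : AEStronglyMeasurable f μ)
    (hg : AEStronglyMeasurable g μ) :
    ∫⁻ x, ‖f x‖ₑ * ‖g x‖ₑ ^ q ∂μ ≤ eLpNorm' f (p / (p - q)) μ * eLpNorm' g p μ ^ q := by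
  have hp : 0 < p := hq.trans hqp
  have hpq : 0 < p - q := sub_pos.2 hqp
  have hconj : (p / (p - q)).HolderConjugate (p / q) := by
    rw [Real.holderConjugate_iff]
    refine ⟨by rw [lt_div_iff₀ hpq]; linarith, ?_⟩
    field_simp
    ring
  refine (ENNReal.lintegral_mul_le_Lp_mul_Lq μ hconj hf.enorm (hg.enorm.pow_const q)).trans_eq ?_
  have hg_rpow := eLpNorm'_enorm_rpow g (p / q) q hq (μ := μ)
  rw [div_mul_cancel₀ p hq.ne'] at hg_rpow
  rw [← hg_rpow]
  rfl

theorem integrable_mul_abs_rpow {p q : ℝ} (hq : 0 < q) (hqp : q < p) {f v : α → ℝ}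
    (hf : AEStronglyMeasurable f μ) (hfp : eLpNorm' f (p / (p - q)) μ ≠ ∞)
    (hv : AEStronglyMeasurable v μ) (hvp : eLpNorm' v p μ ≠ ∞) :
    Integrable (fun x => f x * |v x| ^ q) μ := by
  refine ⟨hf.mul ((Real.continuous_rpow_const hq.le).comp_aestronglyMeasurable hv.norm), ?_⟩
  simp only [HasFiniteIntegral, enorm_mul, enorm_abs_rpow hq.le]
  exact (lintegral_enorm_mul_enorm_rpow_le hq hqp hf hv).trans_lt (by finiteness)

theorem lintegral_enorm_mul_abs_rpow_sub_abs_rpow_le_add {p q : ℝ} (hq : 0 < q) (hqp : q < p)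
    {f : α → E} {u v : α → ℝ} (hf : AEStronglyMeasurable f μ) (hu : AEStronglyMeasurable u μ)
    (hv : AEStronglyMeasurable v μ) :
    ∫⁻ x, ‖f x‖ₑ * ‖|u x| ^ q - |v x| ^ q‖ₑ ∂μ ≤
      eLpNorm' f (p / (p - q)) μ * (eLpNorm' u p μ ^ q + eLpNorm' v p μ ^ q) := by
  calc ∫⁻ x, ‖f x‖ₑ * ‖|u x| ^ q - |v x| ^ q‖ₑ ∂μ
      ≤ ∫⁻ x, ‖f x‖ₑ * ‖u x‖ₑ ^ q + ‖f x‖ₑ * ‖v x‖ₑ ^ q ∂μ := by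
        refine lintegral_mono fun x => ?_
        rw [← mul_add]
        gcongr
        exact enorm_abs_rpow_sub_abs_rpow_le_add hq.le _ _
    _ = ∫⁻ x, ‖f x‖ₑ * ‖u x‖ₑ ^ q ∂μ + ∫⁻ x, ‖f x‖ₑ * ‖v x‖ₑ ^ q ∂μ :=
        lintegral_add_left' (hf.enorm.mul (hu.enorm.pow_const q)) _
    _ ≤ eLpNorm' f (p / (p - q)) μ * eLpNorm' u p μ ^ q +
          eLpNorm' f (p / (p - q)) μ * eLpNorm' v p μ ^ q :=
        add_le_add (lintegral_enorm_mul_enorm_rpow_le hq hqp hf hu)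
          (lintegral_enorm_mul_enorm_rpow_le hq hqp hf hv)
    _ = _ := (mul_add _ _ _).symm

theorem lintegral_enorm_mul_abs_rpow_sub_abs_rpow_le_mul {q M : ℝ} (hq : 1 < q) {f : α → E}
    (hfM : ∀ x, ‖f x‖ ≤ M) {u v : α → ℝ} (hu : AEStronglyMeasurable u μ)
    (hv : AEStronglyMeasurable v μ) :
    ∫⁻ x, ‖f x‖ₑ * ‖|u x| ^ q - |v x| ^ q‖ₑ ∂μ ≤
      ENNReal.ofReal M * ENNReal.ofReal q * (eLpNorm' (u - v) 2 μ *
        (eLpNorm' u (2 * (q - 1)) μ ^ (q - 1) + eLpNorm' v (2 * (q - 1)) μ ^ (q - 1))) := by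
  have hq1 : 0 < q - 1 := sub_pos.2 hq
  -- Cauchy–Schwarz, as the case `(p, q) := (2 (q - 1), q - 1)` of `lintegral_enorm_mul_enorm_rpow_le`
  have htwo : 2 * (q - 1) / (2 * (q - 1) - (q - 1)) = 2 := by field_simp; ring
  have hholder (w : α → ℝ) (hw : AEStronglyMeasurable w μ) :
      ∫⁻ x, ‖(u - v) x‖ₑ * ‖w x‖ₑ ^ (q - 1) ∂μ ≤
        eLpNorm' (u - v) 2 μ * eLpNorm' w (2 * (q - 1)) μ ^ (q - 1) := by
    simpa only [htwo] using
      lintegral_enorm_mul_enorm_rpow_le (p := 2 * (q - 1)) hq1 (by linarith) (hu.sub hv) hw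
  have hmeas : AEMeasurable (fun x => ‖(u - v) x‖ₑ * ‖u x‖ₑ ^ (q - 1)) μ :=
    (hu.sub hv).enorm.mul (hu.enorm.pow_const _)
  calc ∫⁻ x, ‖f x‖ₑ * ‖|u x| ^ q - |v x| ^ q‖ₑ ∂μ
      ≤ ∫⁻ x, ENNReal.ofReal M * ENNReal.ofReal q * (‖(u - v) x‖ₑ * ‖u x‖ₑ ^ (q - 1) +
          ‖(u - v) x‖ₑ * ‖v x‖ₑ ^ (q - 1)) ∂μ := by
        refine lintegral_mono fun x => ?_
        calc ‖f x‖ₑ * ‖|u x| ^ q - |v x| ^ q‖ₑ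
            ≤ ENNReal.ofReal M * (ENNReal.ofReal q * (‖u x‖ₑ ^ (q - 1) + ‖v x‖ₑ ^ (q - 1)) *
                ‖u x - v x‖ₑ) := by
              gcongr
              · rw [← ofReal_norm]
                exact ENNReal.ofReal_le_ofReal (hfM x)
              · exact enorm_abs_rpow_sub_abs_rpow_le hq.le _ _
          _ = _ := by simp only [Pi.sub_apply]; ring
    _ = ENNReal.ofReal M * ENNReal.ofReal q * (∫⁻ x, ‖(u - v) x‖ₑ * ‖u x‖ₑ ^ (q - 1) ∂μ +
          ∫⁻ x, ‖(u - v) x‖ₑ * ‖v x‖ₑ ^ (q - 1) ∂μ) := by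
        rw [lintegral_const_mul' _ _ (by finiteness), lintegral_add_left' hmeas]
    _ ≤ _ := by
        rw [mul_add (eLpNorm' (u - v) 2 μ)]
        gcongr
        exacts [hholder u hu, hholder v hv]

theorem tendsto_lintegral_enorm_mul_abs_rpow_sub_abs_rpow [IsFiniteMeasure μ] {ι : Type*}
    {l : Filter ι} {p q M : ℝ} (hq : 1 < q) (h2qp : 2 * (q - 1) ≤ p) {f : α → E}
    (hfM : ∀ x, ‖f x‖ ≤ M) {u : ι → α → ℝ} {v : α → ℝ} (hu : ∀ i, AEStronglyMeasurable (u i) μ)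
    (hv : AEStronglyMeasurable v μ) {C : ℝ≥0∞} (hC : C ≠ ∞) (huC : ∀ i, eLpNorm' (u i) p μ ≤ C)
    (hvC : eLpNorm' v p μ ≤ C) (hlim : Tendsto (fun i => eLpNorm' (u i - v) 2 μ) l (𝓝 0)) :
    Tendsto (fun i => ∫⁻ x, ‖f x‖ₑ * ‖|u i x| ^ q - |v x| ^ q‖ₑ ∂μ) l (𝓝 0) := by
  have hq1 : 0 < q - 1 := sub_pos.2 hq
  set K := (C * μ univ ^ (1 / (2 * (q - 1)) - 1 / p)) ^ (q - 1)
  have hK : K ≠ ∞ := by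
    have : 0 ≤ 1 / (2 * (q - 1)) - 1 / p :=
      sub_nonneg.2 (one_div_le_one_div_of_le (by positivity) h2qp)
    finiteness
  have hlocal (w : α → ℝ) (hw : AEStronglyMeasurable w μ) (hwC : eLpNorm' w p μ ≤ C) :
      eLpNorm' w (2 * (q - 1)) μ ^ (q - 1) ≤ K := by
    refine ENNReal.rpow_le_rpow ?_ hq1.le
    exact (eLpNorm'_le_eLpNorm'_mul_rpow_measure_univ (by positivity) h2qp hw).trans
      (by gcongr)
  have hbound (i : ι) : ∫⁻ x, ‖f x‖ₑ * ‖|u i x| ^ q - |v x| ^ q‖ₑ ∂μ ≤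
      ENNReal.ofReal M * ENNReal.ofReal q * (eLpNorm' (u i - v) 2 μ * (K + K)) :=
    (lintegral_enorm_mul_abs_rpow_sub_abs_rpow_le_mul hq hfM (hu i) hv).trans
      (by gcongr; exacts [hlocal _ (hu i) (huC i), hlocal v hv hvC])
  have hmajorant : Tendsto (fun i => ENNReal.ofReal M * ENNReal.ofReal q *
      (eLpNorm' (u i - v) 2 μ * (K + K))) l (𝓝 0) := by
    simpa using ENNReal.Tendsto.const_mul (ENNReal.Tendsto.mul_const hlim (.inr (by finiteness)))
      (.inr (by finiteness) : _ ∨ ENNReal.ofReal M * ENNReal.ofReal q ≠ ∞)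
  exact tendsto_of_tendsto_of_tendsto_of_le_of_le tendsto_const_nhds hmajorant
    (fun _ => zero_le) hbound

theorem tendsto_lintegral_enorm_mul_abs_rpow_sub_abs_rpow_of_tendsto_ball [PseudoMetricSpace α]
    [ProperSpace α] [OpensMeasurableSpace α] [IsFiniteMeasureOnCompacts μ] {ι : Type*}
    {l : Filter ι} {p q M : ℝ} (hq : 1 < q) (hqp : q < p) (h2qp : 2 * (q - 1) ≤ p) (x₀ : α)
    {f : α → E} (hf : AEStronglyMeasurable f μ) (hfM : ∀ x, ‖f x‖ ≤ M)
    (hfp : eLpNorm' f (p / (p - q)) μ ≠ ∞) {u : ι → α → ℝ} {v : α → ℝ}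
    (hu : ∀ i, AEStronglyMeasurable (u i) μ) (hv : AEStronglyMeasurable v μ) {C : ℝ≥0∞}
    (hC : C ≠ ∞) (huC : ∀ i, eLpNorm' (u i) p μ ≤ C) (hvC : eLpNorm' v p μ ≤ C)
    (hlim : ∀ R > 0,
      Tendsto (fun i => eLpNorm' (u i - v) 2 (μ.restrict (Metric.ball x₀ R))) l (𝓝 0)) :
    Tendsto (fun i => ∫⁻ x, ‖f x‖ₑ * ‖|u i x| ^ q - |v x| ^ q‖ₑ ∂μ) l (𝓝 0) := by
  have hp : 0 < p := (zero_lt_one.trans hq).trans hqp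
  have hrestrict (s : Set α) (w : α → ℝ) (hwC : eLpNorm' w p μ ≤ C) :
      eLpNorm' w p (μ.restrict s) ≤ C :=
    (eLpNorm'_mono_measure w Measure.restrict_le_self hp.le).trans hwC
  refine tendsto_lintegral_nhds_zero_of_forall_compl_le fun ε hε => ?_
  have htail := ENNReal.Tendsto.mul_const
    (tendsto_eLpNorm'_restrict_compl_ball (div_pos hp (sub_pos.2 hqp)) hfp x₀)
    (.inr (by finiteness) : _ ∨ C ^ q + C ^ q ≠ ∞)
  rw [zero_mul] at htail
  obtain ⟨R, hRtail, hR⟩ :=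
    ((ENNReal.tendsto_nhds_zero.1 htail ε hε).and (eventually_gt_atTop 0)).exists
  refine ⟨Metric.ball x₀ R, measurableSet_ball, fun i => ?_, ?_⟩
  · refine (lintegral_enorm_mul_abs_rpow_sub_abs_rpow_le_add (zero_lt_one.trans hq) hqp
      hf.restrict (hu i).restrict hv.restrict).trans (le_trans ?_ hRtail)
    gcongr
    exacts [hrestrict _ _ (huC i), hrestrict _ _ hvC]
  · have : IsFiniteMeasure (μ.restrict (Metric.ball x₀ R)) :=
      isFiniteMeasure_restrict.2 measure_ball_lt_top.ne
    exact tendsto_lintegral_enorm_mul_abs_rpow_sub_abs_rpow hq h2qp hfM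
      (fun i => (hu i).restrict) hv.restrict hC (fun i => hrestrict _ _ (huC i))
      (hrestrict _ _ hvC) (hlim R hR)

theorem weighted_q_integral_convergence (N : ℕ) (p q : ℝ)
    (hp : 2 < p) (hq1 : 1 < q) (hq2 : q < 2)
    (f : EuclideanSpace ℝ (Fin N) → ℝ) (hfm : Measurable f)
    (M : ℝ) (hfb : ∀ x, |f x| ≤ M)
    (hfq : (∫⁻ x, ENNReal.ofReal (|f x| ^ (p / (p - q)))) < ⊤)
    (u : ℕ → EuclideanSpace ℝ (Fin N) → ℝ) (hum : ∀ n, Measurable (u n))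
    (u₀ : EuclideanSpace ℝ (Fin N) → ℝ) (hu₀m : Measurable u₀)
    (hub : (⨆ n, eLpNorm (u n) (ENNReal.ofReal p) volume) < ⊤)
    (hu₀ : eLpNorm u₀ (ENNReal.ofReal p) volume < ⊤)
    (hconv : ∀ R : ℝ, 0 < R →
      Tendsto (fun n => ∫⁻ x in Metric.ball (0 : EuclideanSpace ℝ (Fin N)) R,
        ENNReal.ofReal ((u n x - u₀ x) ^ 2)) atTop (nhds 0)) :
    Tendsto (fun n => ∫ x, f x * |u n x| ^ q) atTop (nhds (∫ x, f x * |u₀ x| ^ q)) := by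
  have hp0 : 0 < p := by linarith
  have hq0 : 0 < q := by linarith
  have hqp : q < p := by linarith
  have hf : eLpNorm' f (p / (p - q)) volume ≠ ∞ := by
    rw [eLpNorm'_eq_lintegral_ofReal_abs_rpow (div_pos hp0 (sub_pos.2 hqp)).le]
    exact ENNReal.rpow_ne_top_of_nonneg (by positivity) hfq.ne
  set C := (⨆ n, eLpNorm (u n) (ENNReal.ofReal p) volume) ⊔ eLpNorm u₀ (ENNReal.ofReal p) volume
  have hC : C ≠ ∞ := (sup_lt_iff.2 ⟨hub, hu₀⟩).ne
  have huC (n : ℕ) : eLpNorm' (u n) p volume ≤ C := by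
    rw [← eLpNorm_ofReal_eq_eLpNorm' hp0]
    exact le_sup_of_le_left (le_iSup (fun n => eLpNorm (u n) _ _) n)
  have hu₀C : eLpNorm' u₀ p volume ≤ C := by
    rw [← eLpNorm_ofReal_eq_eLpNorm' hp0]
    exact le_sup_right
  refine tendsto_integral_of_L1 _
    (integrable_mul_abs_rpow hq0 hqp hfm.aestronglyMeasurable hf hu₀m.aestronglyMeasurable
      (ne_top_of_le_ne_top hC hu₀C)).aestronglyMeasurable
    (Eventually.of_forall fun n => integrable_mul_abs_rpow hq0 hqp hfm.aestronglyMeasurable hf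
      (hum n).aestronglyMeasurable (ne_top_of_le_ne_top hC (huC n))) ?_
  simp only [← mul_sub, enorm_mul]
  exact tendsto_lintegral_enorm_mul_abs_rpow_sub_abs_rpow_of_tendsto_ball hq1 hqp (by linarith) 0
    hfm.aestronglyMeasurable hfb hf (fun n => (hum n).aestronglyMeasurable)
    hu₀m.aestronglyMeasurable hC huC hu₀C
    fun R hR => tendsto_eLpNorm'_two_of_tendsto_lintegral_sq (hconv R hR)
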